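/- For every natural number k ≥ 1, ∑_{i=1}^{k} cot^2(iπ/(k+1)) = k(k-1)/3. -/

import Mathlib

open Real Finset

/-!
Put `n = k + 1`, `ζ = exp (2πi/n)` and `A_j = ∑_{m<n} m ζ^{jm}`. For `0 < j < n` the
arithmetic-geometric sum gives `A_j = n / (ζ^j - 1)`, so `A_j A_{-j} = n² / (4 sin² (jπ/n))`,
while `A_0 = n(n-1)/2`. Parseval's identity for the discrete Fourier transform,
`∑_j A_j A_{-j} = n ∑_m m²`, then yields `∑_{0<j<n} 1 / sin² (jπ/n) = (n² - 1)/3`, and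
`cot² = 1 / sin² - 1` termwise.
-/

lemma Complex.four_mul_sin_sq (z : ℂ) :
    4 * Complex.sin z ^ 2 =
      (1 - Complex.exp (2 * z * Complex.I)) * (1 - (Complex.exp (2 * z * Complex.I))⁻¹) := by
  have hu : Complex.exp (2 * z * Complex.I) = Complex.exp (z * Complex.I) ^ 2 := by
    rw [← Complex.exp_nat_mul]; ring_nf
  have hu0 := Complex.exp_ne_zero (z * Complex.I)
  rw [Complex.sin, hu, neg_mul, Complex.exp_neg]
  field_simp
  linear_combination 4 * (Complex.exp (z * Complex.I) ^ 2 - 1) ^ 2 * Complex.I_sq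

lemma Real.cot_sq_add_one {x : ℝ} (hx : sin x ≠ 0) : cot x ^ 2 + 1 = (sin x ^ 2)⁻¹ := by
  rw [cot_eq_cos_div_sin]
  field_simp
  linear_combination cos_sq_add_sin_sq x

lemma sub_one_mul_sum_range_natCast_mul_pow {R : Type*} [CommRing R] (w : R) (n : ℕ) :
    (w - 1) * ∑ m ∈ range n, (m : R) * w ^ m = n * w ^ n - w * ∑ m ∈ range n, w ^ m := by
  induction n with
  | zero => simp
  | succ n ih =>
    rw [sum_range_succ, sum_range_succ, mul_add, ih]
    push_cast
    ring

lemma sum_range_natCast_mul_pow_of_pow_eq_one {K : Type*} [Field K] {w : K} {n : ℕ}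
    (hwn : w ^ n = 1) (hw : w ≠ 1) :
    ∑ m ∈ range n, (m : K) * w ^ m = n / (w - 1) := by
  have hgeom : ∑ m ∈ range n, w ^ m = 0 := by
    rw [geom_sum_eq hw, hwn, sub_self, zero_div]
  rw [eq_div_iff (sub_ne_zero.2 hw), mul_comm, sub_one_mul_sum_range_natCast_mul_pow, hwn, hgeom]
  ring

lemma Complex.inv_sin_sq_eq_sum_mul_sum {z : ℂ} {n : ℕ} (hn : n ≠ 0)
    (hwn : Complex.exp (2 * z * Complex.I) ^ n = 1) (hw : Complex.exp (2 * z * Complex.I) ≠ 1) :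
    (Complex.sin z ^ 2)⁻¹ =
      4 * ((∑ m ∈ range n, (m : ℂ) * Complex.exp (2 * z * Complex.I) ^ m) *
        ∑ m ∈ range n, (m : ℂ) * (Complex.exp (2 * z * Complex.I))⁻¹ ^ m) / n ^ 2 := by
  rw [show Complex.sin z ^ 2 = (1 - Complex.exp (2 * z * Complex.I)) *
      (1 - (Complex.exp (2 * z * Complex.I))⁻¹) / 4 by
    linear_combination Complex.four_mul_sin_sq z / 4]
  rw [sum_range_natCast_mul_pow_of_pow_eq_one hwn hw,
    sum_range_natCast_mul_pow_of_pow_eq_one (by rw [inv_pow, hwn, inv_one]) (inv_ne_one.2 hw)]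
  have h0 : Complex.exp (2 * z * Complex.I) ≠ 0 := Complex.exp_ne_zero _
  have hn' : (n : ℂ) ≠ 0 := Nat.cast_ne_zero.2 hn
  have h1 : Complex.exp (2 * z * Complex.I) - 1 ≠ 0 := sub_ne_zero.2 hw
  have h2 : (Complex.exp (2 * z * Complex.I))⁻¹ - 1 ≠ 0 := sub_ne_zero.2 (inv_ne_one.2 hw)
  generalize Complex.exp (2 * z * Complex.I) = w at *
  field_simp

lemma Finset.two_mul_sum_range_natCast {R : Type*} [CommRing R] (n : ℕ) :
    2 * ∑ m ∈ range n, (m : R) = n * (n - 1) := by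
  induction n with
  | zero => simp
  | succ n ih => rw [sum_range_succ, mul_add, ih]; push_cast; ring

lemma Finset.six_mul_sum_range_natCast_sq {R : Type*} [CommRing R] (n : ℕ) :
    6 * ∑ m ∈ range n, (m : R) ^ 2 = n * (n - 1) * (2 * n - 1) := by
  induction n with
  | zero => simp
  | succ n ih => rw [sum_range_succ, mul_add, ih]; push_cast; ring

namespace IsPrimitiveRoot

variable {K : Type*} [Field K] {ζ : K} {n : ℕ}

lemma sum_pow_mul_inv_pow (hζ : IsPrimitiveRoot ζ n) {m l : ℕ} (hm : m < n) (hl : l < n) :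
    ∑ j ∈ range n, (ζ ^ j) ^ m * (ζ ^ j)⁻¹ ^ l = if m = l then (n : K) else 0 := by
  have hζ0 : ζ ≠ 0 := hζ.ne_zero (by omega)
  have hpow : ∀ j, (ζ ^ j) ^ m * (ζ ^ j)⁻¹ ^ l = (ζ ^ m / ζ ^ l) ^ j := fun j => by
    rw [div_pow, ← pow_mul, ← pow_mul, inv_pow, ← pow_mul, ← pow_mul, mul_comm j, mul_comm j,
      div_eq_mul_inv]
  simp only [hpow]
  split_ifs with h
  · simp [h, hζ0]
  · have hw : ζ ^ m / ζ ^ l ≠ 1 := fun h' =>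
      h (hζ.pow_inj hm hl (div_eq_one_iff_eq (pow_ne_zero _ hζ0) |>.1 h'))
    rw [geom_sum_eq hw, div_pow, ← pow_mul, ← pow_mul, mul_comm m, mul_comm l, pow_mul, pow_mul,
      hζ.pow_eq_one, one_pow, one_pow, div_one, sub_self, zero_div]

/-- Parseval's identity for the discrete Fourier transform of `a`, with `(ζ ^ j)⁻¹` playing the
role of the complex conjugate of `ζ ^ j`. -/
lemma sum_mul_sum_inv (hζ : IsPrimitiveRoot ζ n) (a : ℕ → K) :
    ∑ j ∈ range n, (∑ m ∈ range n, a m * (ζ ^ j) ^ m) * (∑ l ∈ range n, a l * (ζ ^ j)⁻¹ ^ l) =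
      n * ∑ m ∈ range n, a m ^ 2 := by
  calc _ = ∑ m ∈ range n, ∑ l ∈ range n,
          a m * a l * ∑ j ∈ range n, (ζ ^ j) ^ m * (ζ ^ j)⁻¹ ^ l := by
        simp_rw [sum_mul_sum, mul_sum]
        rw [sum_comm]
        refine sum_congr rfl fun m _ => ?_
        rw [sum_comm]
        exact sum_congr rfl fun l _ => sum_congr rfl fun j _ => by ring
    _ = ∑ m ∈ range n, a m * a m * n := by
        refine sum_congr rfl fun m hm => ?_
        rw [sum_congr rfl fun l hl => by
          rw [hζ.sum_pow_mul_inv_pow (mem_range.1 hm) (mem_range.1 hl), mul_ite, mul_zero]]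
        simp [hm]
    _ = _ := by rw [mul_sum]; exact sum_congr rfl fun m _ => by ring

end IsPrimitiveRoot

theorem sum_inv_sin_sq {n : ℕ} (hn : n ≠ 0) :
    ∑ j ∈ Ico 1 n, (sin (j * π / n) ^ 2)⁻¹ = ((n : ℝ) ^ 2 - 1) / 3 := by
  set ζ := Complex.exp (2 * π * Complex.I / n)
  have hζ : IsPrimitiveRoot ζ n := Complex.isPrimitiveRoot_exp n hn
  set F : ℕ → ℂ := fun j =>
    (∑ m ∈ range n, (m : ℂ) * (ζ ^ j) ^ m) * (∑ l ∈ range n, (l : ℂ) * (ζ ^ j)⁻¹ ^ l)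
  have hF0 : F 0 = (∑ m ∈ range n, (m : ℂ)) ^ 2 := by simp [F, sq]
  have hsplit : ∑ j ∈ range n, F j = F 0 + ∑ j ∈ Ico 1 n, F j := by
    rw [range_eq_Ico, sum_eq_sum_Ico_succ_bot (Nat.pos_of_ne_zero hn)]
  have hterm : ∀ j ∈ Ico 1 n, (Complex.sin (j * π / n) ^ 2)⁻¹ = 4 * F j / n ^ 2 := by
    intro j hj
    obtain ⟨hj1, hjn⟩ := mem_Ico.1 hj
    have hw : Complex.exp (2 * (j * π / n) * Complex.I) = ζ ^ j := by
      rw [← Complex.exp_nat_mul]; congr 1; field_simp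
    have hwn : (ζ ^ j) ^ n = 1 := by rw [← pow_mul, mul_comm, pow_mul, hζ.pow_eq_one, one_pow]
    rw [Complex.inv_sin_sq_eq_sum_mul_sum hn (by rw [hw, hwn])
      (hw ▸ hζ.pow_ne_one_of_pos_of_lt (by omega) hjn), hw]
  have hparseval := hζ.sum_mul_sum_inv (fun m => (m : ℂ))
  rw [hsplit, hF0] at hparseval
  have hS1 := two_mul_sum_range_natCast (R := ℂ) n
  have hS2 := six_mul_sum_range_natCast_sq (R := ℂ) n
  apply Complex.ofReal_injective
  push_cast
  rw [sum_congr rfl hterm, ← sum_div, ← mul_sum]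
  set S1 := ∑ m ∈ range n, (m : ℂ)
  set S2 := ∑ m ∈ range n, (m : ℂ) ^ 2
  -- `n * S2 - S1 ^ 2 = n ^ 2 * (n ^ 2 - 1) / 12`, the variance of `0, …, n - 1` times `n ^ 2`
  field_simp
  linear_combination 12 * hparseval - 3 * (2 * S1 + n * (n - 1)) * hS1 + 2 * n * hS2

theorem sum_cot_sq_general (k : ℕ) :
    ∑ i ∈ Finset.Icc 1 k, (Real.cot (i * Real.pi / (k + 1))) ^ 2 =
      (k : ℝ) * ((k : ℝ) - 1) / 3 := by
  have hsin : ∀ i ∈ Icc 1 k, sin (i * π / (k + 1)) ≠ 0 := by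
    intro i hi
    obtain ⟨hi1, hik⟩ := mem_Icc.1 hi
    refine (sin_pos_of_pos_of_lt_pi (by positivity) ?_).ne'
    rw [div_lt_iff₀ (by positivity)]
    have : (i : ℝ) < k + 1 := by exact_mod_cast Nat.lt_succ_of_le hik
    nlinarith [pi_pos]
  have hcsc := sum_inv_sin_sq (n := k + 1) k.succ_ne_zero
  rw [Ico_add_one_right_eq_Icc] at hcsc
  push_cast at hcsc
  calc ∑ i ∈ Icc 1 k, cot (i * π / (k + 1)) ^ 2
      = ∑ i ∈ Icc 1 k, ((sin (i * π / (k + 1)) ^ 2)⁻¹ - 1) :=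
        sum_congr rfl fun i hi => by rw [← cot_sq_add_one (hsin i hi), add_sub_cancel_right]
    _ = (((k : ℝ) + 1) ^ 2 - 1) / 3 - k := by simp [sum_sub_distrib, hcsc]
    _ = k * (k - 1) / 3 := by ring

theorem sum_cot_sq (k : ℕ) (hk : 1 ≤ k) :
    ∑ i ∈ Finset.Icc 1 k, (Real.cot (i * Real.pi / (k + 1))) ^ 2 =
      (k : ℝ) * ((k : ℝ) - 1) / 3 :=
  sum_cot_sq_general k
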